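/- Let G be a countable group acting on a countable set X with subexponential growth of orbits. Then there exists a distance d : X × X → ℕ such that all balls are finite, for some (equivalently any) basepoint x₀ the function n ↦ |B_{(X,d)}(x₀; n)| has subexponential growth, and the G-action has bounded displacement: sup_{x∈X} d(x, gx) < ∞ for every g ∈ G. -/

import Mathlib

open Filter

/-- The set of points reachable from `x` by products of at most `n` elements of `S`. -/
def orbitSet {G X : Type*} [Group G] [MulAction G X] (S : Finset G) (x : X) (n : ℕ) : Set X :=
  {y | ∃ l : List G, l.length ≤ n ∧ (∀ g ∈ l, g ∈ S) ∧ l.prod • x = y}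

/-!
Enumerate `G = {f k}` and `X = {e k}`, join `x` to `f k • x` and `e 0` to `e k` by an edge of
weight `w k`, and let `d` be the weighted path metric; then `f k` moves every point by at most
`w k`. A path of weight `≤ n` only uses edges with `w k ≤ n`, i.e. `k ≤ i(n)`, so the ball of
radius `n` about `e j` lies in the union of the `n`-step orbits of `e 0, …, e i(n)` under
`f 0 ^ ±1, …, f i(n) ^ ±1`. By subexponential growth of orbits, `w i` can be chosen so large that
this union has at most `exp (n / (i + 1))` points as soon as `n ≥ w i`; since `i(n) → ∞`, the
balls then grow subexponentially.
-/

open Finset Real Topology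

def IsSubexponential (a : ℕ → ℝ) : Prop :=
  ∀ ε > 0, ∀ᶠ n in atTop, a n ≤ exp (ε * n)

theorem isSubexponential_of_tendsto_rpow {a : ℕ → ℝ} (ha : ∀ n, 0 ≤ a n)
    (h : Tendsto (fun n : ℕ => a n ^ (1 / (n : ℝ))) atTop (𝓝 1)) : IsSubexponential a := by
  intro ε hε
  filter_upwards [h.eventually (gt_mem_nhds (one_lt_exp_iff.2 hε)), eventually_ge_atTop 1]
    with n hn hn1
  calc a n = (a n ^ (1 / (n : ℝ))) ^ n := by
        rw [one_div, rpow_inv_natCast_pow (ha n) (by omega)]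
    _ ≤ exp ε ^ n := pow_le_pow_left₀ (rpow_nonneg (ha n) _) hn.le n
    _ = exp (ε * n) := by rw [mul_comm, exp_nat_mul]

theorem IsSubexponential.sum {ι : Type*} (s : Finset ι) {a : ι → ℕ → ℝ}
    (h : ∀ i ∈ s, IsSubexponential (a i)) : IsSubexponential fun n => ∑ i ∈ s, a i n := by
  intro ε hε
  have hcard : ∀ᶠ n : ℕ in atTop, (#s : ℝ) ≤ exp (ε / 2 * n) :=
    (tendsto_exp_atTop.comp
      (tendsto_natCast_atTop_atTop.const_mul_atTop (half_pos hε))).eventually_ge_atTop _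
  filter_upwards [(eventually_all_finset s).2 fun i hi => h i hi (ε / 2) (half_pos hε), hcard]
    with n hn hs
  calc ∑ i ∈ s, a i n ≤ #s • exp (ε / 2 * n) := sum_le_card_nsmul _ _ _ hn
    _ ≤ exp (ε / 2 * n) * exp (ε / 2 * n) := by rw [nsmul_eq_mul]; gcongr
    _ = exp (ε * n) := by rw [← exp_add]; ring_nf

theorem IsSubexponential.tendsto_rpow {a : ℕ → ℝ} (h1 : ∀ n, 1 ≤ a n)
    (h : IsSubexponential a) : Tendsto (fun n : ℕ => a n ^ (1 / (n : ℝ))) atTop (𝓝 1) := by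
  refine tendsto_order.2 ⟨fun b hb => Eventually.of_forall fun n =>
    hb.trans_le (one_le_rpow (h1 n) (by positivity)), fun b hb => ?_⟩
  have hlog : 0 < log b / 2 := half_pos (log_pos hb)
  filter_upwards [h _ hlog, eventually_ge_atTop 1] with n hn hn1
  calc a n ^ (1 / (n : ℝ)) ≤ exp (log b / 2 * n) ^ (1 / (n : ℝ)) :=
        rpow_le_rpow (zero_le_one.trans (h1 n)) hn (by positivity)
    _ = exp (log b / 2) := by rw [← exp_mul]; field_simp
    _ < exp (log b) := exp_lt_exp.2 (by linarith)
    _ = b := exp_log (by linarith)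

section OrbitSet

variable {G X : Type*} [Group G] [MulAction G X] {S : Finset G} {x y : X} {m n : ℕ}

theorem orbitSet_mono (h : m ≤ n) : orbitSet S x m ⊆ orbitSet S x n :=
  fun _ ⟨l, hl, hS, hp⟩ => ⟨l, hl.trans h, hS, hp⟩

theorem mem_orbitSet_self : x ∈ orbitSet S x n :=
  ⟨[], by simp, by simp, by simp⟩

theorem smul_mem_orbitSet {g : G} (hg : g ∈ S) (hy : y ∈ orbitSet S x n) :
    g • y ∈ orbitSet S x (n + 1) := by
  obtain ⟨l, hl, hS, rfl⟩ := hy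
  refine ⟨g :: l, by simpa using hl, ?_, by rw [List.prod_cons, mul_smul]⟩
  simpa [hg] using hS

theorem orbitSet_finite (S : Finset G) (x : X) (n : ℕ) : (orbitSet S x n).Finite := by
  refine ((List.finite_length_le S n).image
    fun l : List S => (l.map Subtype.val).prod • x).subset ?_
  rintro _ ⟨l, hl, hS, rfl⟩
  lift l to List S using hS
  exact ⟨l, by simpa using hl, rfl⟩

end OrbitSet

section WeightedPath

variable {X : Type*} {E : X → X → ℕ → Prop} {x y z : X} {m n w : ℕ}

/-- `E x y w` means an edge of weight `w` from `x` to `y`; `n` is the total weight of the path. -/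
inductive WeightedPath (E : X → X → ℕ → Prop) : ℕ → X → X → Prop
  | refl (x : X) : WeightedPath E 0 x x
  | tail {x y z : X} {m w : ℕ} : WeightedPath E m x y → E y z w → WeightedPath E (m + w) x z

namespace WeightedPath

theorem single (h : E x y w) : WeightedPath E w x y := by
  simpa using tail (refl x) h

theorem trans (h : WeightedPath E m x y) (h' : WeightedPath E n y z) :
    WeightedPath E (m + n) x z := by
  induction h' with
  | refl => exact h
  | tail _ e ih => rw [← Nat.add_assoc]; exact (ih h).tail e

theorem symm (hE : ∀ x y w, E x y w → E y x w) (h : WeightedPath E m x y) :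
    WeightedPath E m y x := by
  induction h with
  | refl x => exact refl x
  | tail _ e ih => rw [Nat.add_comm]; exact (single (hE _ _ _ e)).trans ih

theorem eq_of_weight_eq_zero (hE : ∀ x y w, E x y w → 0 < w) (h : WeightedPath E m x y)
    (hm : m = 0) : x = y := by
  induction h with
  | refl => rfl
  | tail _ e => have := hE _ _ _ e; omega

theorem exists_mem_orbitSet {G : Type*} [Group G] [MulAction G X] {S : Finset G} {A : Set X}
    (hpos : ∀ x y w, E x y w → 0 < w)
    (hE : ∀ x y w, E x y w → w ≤ n → (∃ g ∈ S, g • x = y) ∨ y ∈ A)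
    (h : WeightedPath E m x y) (hm : m ≤ n) (hx : x ∈ A) : ∃ a ∈ A, y ∈ orbitSet S a m := by
  induction h with
  | refl x => exact ⟨x, hx, mem_orbitSet_self⟩
  | tail _ e ih =>
    have hw := hpos _ _ _ e
    obtain ⟨a, ha, hy⟩ := ih (by omega) hx
    rcases hE _ _ _ e (by omega) with ⟨g, hg, rfl⟩ | hz
    · exact ⟨a, ha, orbitSet_mono (by omega) (smul_mem_orbitSet hg hy)⟩
    · exact ⟨_, hz, mem_orbitSet_self⟩

end WeightedPath

/-- Junk value `0` when `y` cannot be reached from `x`. -/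
noncomputable def pathDist (E : X → X → ℕ → Prop) (x y : X) : ℕ :=
  sInf {n | WeightedPath E n x y}

theorem WeightedPath.pathDist_le (h : WeightedPath E m x y) : pathDist E x y ≤ m :=
  Nat.sInf_le h

theorem weightedPath_pathDist (h : ∃ m, WeightedPath E m x y) :
    WeightedPath E (pathDist E x y) x y :=
  Nat.sInf_mem h

theorem pathDist_le_iff (h : ∃ m, WeightedPath E m x y) :
    pathDist E x y ≤ n ↔ ∃ m ≤ n, WeightedPath E m x y :=
  ⟨fun hn => ⟨_, hn, weightedPath_pathDist h⟩, fun ⟨_, hm, hp⟩ => hp.pathDist_le.trans hm⟩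

theorem pathDist_eq_zero_iff (hpos : ∀ x y w, E x y w → 0 < w)
    (h : ∃ m, WeightedPath E m x y) : pathDist E x y = 0 ↔ x = y :=
  ⟨(weightedPath_pathDist h).eq_of_weight_eq_zero hpos,
    by rintro rfl; exact Nat.le_zero.1 (WeightedPath.refl x).pathDist_le⟩

theorem pathDist_comm (hE : ∀ x y w, E x y w → E y x w) (h : ∃ m, WeightedPath E m x y) :
    pathDist E x y = pathDist E y x :=
  have h' : WeightedPath E (pathDist E x y) x y := weightedPath_pathDist h
  le_antisymm ((weightedPath_pathDist ⟨_, h'.symm hE⟩).symm hE).pathDist_le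
    (h'.symm hE).pathDist_le

theorem pathDist_triangle (hxy : ∃ m, WeightedPath E m x y) (hyz : ∃ m, WeightedPath E m y z) :
    pathDist E x z ≤ pathDist E x y + pathDist E y z :=
  ((weightedPath_pathDist hxy).trans (weightedPath_pathDist hyz)).pathDist_le

end WeightedPath

section Construction

variable {G X : Type*} [Group G] [MulAction G X] {f : ℕ → G} {e : ℕ → X} {N : ℕ → ℕ}
  {x y : X} {i j k n w : ℕ}

def generators [DecidableEq G] (f : ℕ → G) (i : ℕ) : Finset G :=
  (range (i + 1)).image f ∪ (range (i + 1)).image fun k => (f k)⁻¹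

/-- The summand `k + 1` makes weights positive and `k < edgeWeight N k`, so that `maxEdgeIndex`
needs to search only below `n`. -/
def edgeWeight (N : ℕ → ℕ) (k : ℕ) : ℕ :=
  N k + k + 1

/-- The edges `x — f k • x` bound the displacement of `f k`, the edges `e 0 — e k` make the graph
connected; the `k`-th ones get the weight `edgeWeight N k`. -/
def orbitEdge (f : ℕ → G) (e : ℕ → X) (N : ℕ → ℕ) (x y : X) (w : ℕ) : Prop :=
  ∃ k, w = edgeWeight N k ∧
    (f k • x = y ∨ f k • y = x ∨ (x = e 0 ∧ y = e k) ∨ (x = e k ∧ y = e 0))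

theorem orbitEdge_pos (h : orbitEdge f e N x y w) : 0 < w := by
  obtain ⟨k, rfl, -⟩ := h
  exact Nat.succ_pos _

theorem orbitEdge_symm (h : orbitEdge f e N x y w) : orbitEdge f e N y x w := by
  obtain ⟨k, rfl, hk⟩ := h
  exact ⟨k, rfl, by tauto⟩

theorem orbitEdge_connected (he : Function.Surjective e) (x y : X) :
    ∃ m, WeightedPath (orbitEdge f e N) m x y := by
  obtain ⟨a, rfl⟩ := he x
  obtain ⟨b, rfl⟩ := he y
  have hto : WeightedPath (orbitEdge f e N) _ (e a) (e 0) :=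
    .single ⟨a, rfl, .inr (.inr (.inr ⟨rfl, rfl⟩))⟩
  have hfrom : WeightedPath (orbitEdge f e N) _ (e 0) (e b) :=
    .single ⟨b, rfl, .inr (.inr (.inl ⟨rfl, rfl⟩))⟩
  exact ⟨_, hto.trans hfrom⟩

theorem pathDist_smul_le (k : ℕ) (x : X) :
    pathDist (orbitEdge f e N) x (f k • x) ≤ edgeWeight N k :=
  (WeightedPath.single ⟨k, rfl, .inl rfl⟩).pathDist_le

def maxEdgeIndex (N : ℕ → ℕ) (n : ℕ) : ℕ :=
  Nat.findGreatest (fun i => edgeWeight N i ≤ n) n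

theorem le_maxEdgeIndex (h : edgeWeight N k ≤ n) : k ≤ maxEdgeIndex N n :=
  Nat.le_findGreatest (by unfold edgeWeight at h; omega) h

theorem edgeWeight_maxEdgeIndex_le (h : edgeWeight N k ≤ n) :
    edgeWeight N (maxEdgeIndex N n) ≤ n :=
  Nat.findGreatest_spec (P := fun i => edgeWeight N i ≤ n) (by unfold edgeWeight at h; omega) h

theorem ball_subset_biUnion_orbitSet [DecidableEq G] (he : Function.Surjective e)
    (hi : ∀ k, edgeWeight N k ≤ n → k ≤ i) (hj : j ≤ i) :
    {y | pathDist (orbitEdge f e N) (e j) y ≤ n} ⊆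
      ⋃ j ∈ range (i + 1), orbitSet (generators f i) (e j) n := by
  have hstep : ∀ x z w, orbitEdge f e N x z w → w ≤ n →
      (∃ g ∈ generators f i, g • x = z) ∨ z ∈ {x | ∃ j ≤ i, e j = x} := by
    rintro x z _ ⟨k, rfl, hk⟩ hw
    have hki : k < i + 1 := Nat.lt_succ_of_le (hi k hw)
    rcases hk with rfl | rfl | ⟨-, rfl⟩ | ⟨-, rfl⟩
    · exact .inl ⟨f k, mem_union_left _ (mem_image_of_mem _ (mem_range.2 hki)), rfl⟩
    · exact .inl ⟨(f k)⁻¹, mem_union_right _ (mem_image_of_mem (fun k => (f k)⁻¹)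
        (mem_range.2 hki)), inv_smul_smul _ _⟩
    · exact .inr ⟨k, hi k hw, rfl⟩
    · exact .inr ⟨0, Nat.zero_le _, rfl⟩
  intro y hy
  obtain ⟨m, hm, hp⟩ := (pathDist_le_iff (orbitEdge_connected he _ _)).1 hy
  obtain ⟨_, ⟨j', hj', rfl⟩, hy⟩ :=
    hp.exists_mem_orbitSet (fun _ _ _ => orbitEdge_pos) hstep hm ⟨j, hj, rfl⟩
  exact Set.mem_biUnion (mem_range.2 (by omega)) (orbitSet_mono hm hy)

theorem finite_ball (he : Function.Surjective e) (x : X) (n : ℕ) :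
    {y | pathDist (orbitEdge f e N) x y ≤ n}.Finite := by
  classical
  obtain ⟨j, rfl⟩ := he x
  refine ((finite_toSet _).biUnion fun _ _ => orbitSet_finite _ _ _).subset fun y hy =>
    ball_subset_biUnion_orbitSet (n := max n (edgeWeight N j)) he (fun _ => le_maxEdgeIndex)
      (le_maxEdgeIndex (le_max_right _ _)) (Set.mem_ofPred.2 (le_trans hy (le_max_left _ _)))

theorem one_le_card_ball (he : Function.Surjective e) (x : X) (n : ℕ) :
    1 ≤ (Nat.card {y | pathDist (orbitEdge f e N) x y ≤ n} : ℝ) := by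
  rw [Nat.card_coe_set_eq, Nat.one_le_cast, Nat.one_le_iff_ne_zero,
    ← Nat.pos_iff_ne_zero, Set.ncard_pos (finite_ball he x n)]
  exact ⟨x, (WeightedPath.refl x).pathDist_le.trans (Nat.zero_le n)⟩

theorem card_ball_le [DecidableEq G] (he : Function.Surjective e)
    (hi : ∀ k, edgeWeight N k ≤ n → k ≤ i) (hj : j ≤ i) :
    (Nat.card {y | pathDist (orbitEdge f e N) (e j) y ≤ n} : ℝ) ≤
      ∑ j ∈ range (i + 1), (Nat.card (orbitSet (generators f i) (e j) n) : ℝ) := by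
  simp only [Nat.card_coe_set_eq]
  exact_mod_cast (Set.ncard_le_ncard (ball_subset_biUnion_orbitSet he hi hj)
    ((finite_toSet _).biUnion fun _ _ => orbitSet_finite _ _ _)).trans
    (set_ncard_biUnion_le _ _)

theorem isSubexponential_card_ball [DecidableEq G] (he : Function.Surjective e)
    (hN : ∀ i, ∀ n ≥ N i, ∑ j ∈ range (i + 1), (Nat.card (orbitSet (generators f i) (e j) n) : ℝ)
      ≤ exp (1 / (i + 1) * n)) (x : X) :
    IsSubexponential fun n => (Nat.card {y | pathDist (orbitEdge f e N) x y ≤ n} : ℝ) := by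
  obtain ⟨j, rfl⟩ := he x
  intro ε hε
  obtain ⟨i₀, hi₀⟩ := exists_nat_one_div_lt hε
  filter_upwards [eventually_ge_atTop (edgeWeight N j), eventually_ge_atTop (edgeWeight N i₀)]
    with n hj hi₀n
  have hNn : N (maxEdgeIndex N n) ≤ n :=
    (Nat.le_add_right _ _).trans ((Nat.le_succ _).trans (edgeWeight_maxEdgeIndex_le hj))
  have hi₀i : (i₀ : ℝ) + 1 ≤ maxEdgeIndex N n + 1 := by
    exact_mod_cast Nat.succ_le_succ (le_maxEdgeIndex hi₀n)
  calc _ ≤ _ := card_ball_le he (fun _ => le_maxEdgeIndex) (le_maxEdgeIndex hj)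
    _ ≤ exp (1 / (maxEdgeIndex N n + 1) * n) := hN _ n hNn
    _ ≤ exp (ε * n) := by
      gcongr
      exact (one_div_le_one_div_of_le (by positivity) hi₀i).trans hi₀.le

end Construction

theorem exists_metric_subexp_bounded_displacement
    {G X : Type*} [Group G] [MulAction G X] [Countable G] [Countable X]
    (hsub : ∀ (S : Finset G) (x : X),
      Tendsto (fun n : ℕ => (Nat.card (orbitSet S x n) : ℝ) ^ (1 / (n : ℝ))) atTop (nhds 1)) :
    ∃ d : X → X → ℕ,
      (∀ x y, d x y = 0 ↔ x = y) ∧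
      (∀ x y, d x y = d y x) ∧
      (∀ x y z, d x z ≤ d x y + d y z) ∧
      (∀ (x₀ : X) (n : ℕ), {y : X | d x₀ y ≤ n}.Finite) ∧
      (∀ x₀ : X, Tendsto
        (fun n : ℕ => (Nat.card {y : X | d x₀ y ≤ n} : ℝ) ^ (1 / (n : ℝ))) atTop (nhds 1)) ∧
      (∀ g : G, ∃ c : ℕ, ∀ x : X, d x (g • x) ≤ c) := by
  classical
  rcases isEmpty_or_nonempty X with hX | hX
  · exact ⟨fun _ _ => 0, by simp⟩
  obtain ⟨f, hf⟩ := exists_surjective_nat G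
  obtain ⟨e, he⟩ := exists_surjective_nat X
  have hgrowth (i : ℕ) : IsSubexponential fun n =>
      ∑ j ∈ range (i + 1), (Nat.card (orbitSet (generators f i) (e j) n) : ℝ) :=
    IsSubexponential.sum _ fun j _ =>
      isSubexponential_of_tendsto_rpow (fun _ => Nat.cast_nonneg _) (hsub _ _)
  choose N hN using fun i => eventually_atTop.1 (hgrowth i (1 / (i + 1)) (by positivity))
  have hconn := orbitEdge_connected (f := f) (N := N) he
  refine ⟨pathDist (orbitEdge f e N),
    fun x y => pathDist_eq_zero_iff (fun _ _ _ => orbitEdge_pos) (hconn x y),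
    fun x y => pathDist_comm (fun _ _ _ => orbitEdge_symm) (hconn x y),
    fun x y z => pathDist_triangle (hconn x y) (hconn y z), finite_ball he,
    fun x => (isSubexponential_card_ball he hN x).tendsto_rpow (one_le_card_ball he x), ?_⟩
  intro g
  obtain ⟨k, rfl⟩ := hf g
  exact ⟨edgeWeight N k, pathDist_smul_le k⟩
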